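/- Let n ≥ 1, 1 ≤ k ≤ n, M > 0, σ ∈ {−1, 1}, δ > 0, and let u ∈ ℝ be a constant. Let x_1, …, x_n : [T − δ, T] → ℝ satisfy the chain-of-integrators dynamics with constant control u on [T − δ, T]. Suppose x_i(T) = 0 for all 1 ≤ i < k, x_k(T) = σM, and |x_k(t)| ≤ M for all t ∈ [T − δ, T]. Then (−1)^k σ u ≤ 0. -/

import Mathlib

/-!
Integrating the chain backwards from `T`, where the lower states vanish, gives
`x k (T - t) = σ M + u (-t)^k / k!`. At `t = δ` the bound `|x k| ≤ M` then forces
`σ u (-δ)^k / k! ≤ 0`, and `δ^k / k! > 0`.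
-/

open Set Nat

theorem sub_eq_sub_right_of_hasDerivAt_eq {f g f' : ℝ → ℝ} {a b t : ℝ}
    (hf : ∀ s ∈ Icc a b, HasDerivAt f (f' s) s) (hg : ∀ s ∈ Icc a b, HasDerivAt g (f' s) s)
    (ht : t ∈ Icc a b) : f t - g t = f b - g b := by
  have hconst := constant_of_has_deriv_right_zero (f := fun s => f s - g s)
    (fun s hs => ((hf s hs).sub (hg s hs)).continuousAt.continuousWithinAt)
    (fun s hs => sub_self (f' s) ▸
      ((hf s (Ico_subset_Icc_self hs)).sub (hg s (Ico_subset_Icc_self hs))).hasDerivWithinAt)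
  rw [hconst t ht, hconst b (right_mem_Icc.mpr (ht.1.trans ht.2))]

theorem hasDerivAt_mul_sub_pow_succ_div_factorial (c b t : ℝ) (j : ℕ) :
    HasDerivAt (fun s => c * (s - b) ^ (j + 1) / (j + 1)!) (c * (t - b) ^ j / j !) t := by
  refine ((((hasDerivAt_id t).sub_const b).pow (j + 1)).const_mul c).div_const
    ((j + 1)! : ℝ) |>.congr_deriv ?_
  rw [factorial_succ]
  push_cast
  field_simp
  simp

theorem chain_eq_add_pow_div_factorial {x : ℕ → ℝ → ℝ} {u a b : ℝ} {k : ℕ}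
    (hx1 : ∀ t ∈ Icc a b, HasDerivAt (x 1) u t)
    (hxk : ∀ j, 1 ≤ j → j < k → ∀ t ∈ Icc a b, HasDerivAt (x (j + 1)) (x j t) t)
    (hzero : ∀ i, 1 ≤ i → i < k → x i b = 0) :
    ∀ j, 1 ≤ j → j ≤ k → ∀ t ∈ Icc a b, x j t = x j b + u * (t - b) ^ j / j ! := by
  intro j hj
  induction j, hj using Nat.le_induction with
  | base =>
    intro _ t ht
    have := sub_eq_sub_right_of_hasDerivAt_eq hx1
      (fun s _ => by simpa using hasDerivAt_mul_sub_pow_succ_div_factorial u b s 0) ht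
    simp only [sub_self, mul_zero] at this
    simp only [pow_one, factorial_one, cast_one, div_one]
    linarith
  | succ j hj ih =>
    intro hjk t ht
    have hxj : ∀ s ∈ Icc a b, x j s = u * (s - b) ^ j / j ! := fun s hs => by
      rw [ih (le_of_succ_le hjk) s hs, hzero j hj hjk, zero_add]
    have := sub_eq_sub_right_of_hasDerivAt_eq
      (fun s hs => hxj s hs ▸ hxk j hj hjk s hs)
      (fun s _ => hasDerivAt_mul_sub_pow_succ_div_factorial u b s j) ht
    simp only [sub_self, zero_pow (succ_ne_zero j), mul_zero, zero_div, sub_zero] at this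
    linarith

theorem mul_nonpos_of_abs_mul_add_le {σ M v : ℝ} (hσ : σ = -1 ∨ σ = 1)
    (h : |σ * M + v| ≤ M) : σ * v ≤ 0 := by
  obtain ⟨hlo, hhi⟩ := abs_le.mp h
  rcases hσ with rfl | rfl <;> linarith

theorem sign_of_control_before_reaching_boundary_general
    (n k : ℕ) (hk1 : 1 ≤ k) (hkn : k ≤ n)
    (M : ℝ) (σ : ℝ) (hσ : σ = -1 ∨ σ = 1)
    (δ : ℝ) (hδ : 0 < δ) (u T : ℝ) (x : ℕ → ℝ → ℝ)
    (hx1 : ∀ t ∈ Set.Icc (T - δ) T, HasDerivAt (x 1) u t)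
    (hxk : ∀ j, 1 ≤ j → j < n → ∀ t ∈ Set.Icc (T - δ) T, HasDerivAt (x (j + 1)) (x j t) t)
    (hzero : ∀ i, 1 ≤ i → i < k → x i T = 0)
    (hend : x k T = σ * M)
    (hbound : ∀ t ∈ Set.Icc (T - δ) T, |x k t| ≤ M) :
    (-1 : ℝ) ^ k * σ * u ≤ 0 := by
  have hstart : T - δ ∈ Icc (T - δ) T := left_mem_Icc.mpr (by linarith)
  have hxk_start := chain_eq_add_pow_div_factorial hx1
    (fun j hj hjk => hxk j hj (hjk.trans_le hkn)) hzero k hk1 le_rfl (T - δ) hstart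
  rw [hend] at hxk_start
  have hσu := mul_nonpos_of_abs_mul_add_le hσ (hxk_start ▸ hbound (T - δ) hstart)
  have hscaled : (-1) ^ k * σ * u * (δ ^ k / k !) ≤ 0 := by
    convert hσu using 1
    rw [sub_sub_cancel_left, neg_pow]
    ring
  exact nonpos_of_mul_nonpos_left hscaled (by positivity)

/-- backward-in-time sign argument. Immediately before the state
reaches the constraint boundary `x k = σ M` (with all lower states vanishing at the
arrival time), a constant control `u` keeping `|x k| ≤ M` must satisfy
`(-1)^k σ u ≤ 0`. -/
theorem sign_of_control_before_reaching_boundary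
    (n k : ℕ) (hn : 1 ≤ n) (hk1 : 1 ≤ k) (hkn : k ≤ n)
    (M : ℝ) (hM : 0 < M) (σ : ℝ) (hσ : σ = -1 ∨ σ = 1)
    (δ : ℝ) (hδ : 0 < δ) (u T : ℝ) (x : ℕ → ℝ → ℝ)
    (hx1 : ∀ t ∈ Set.Icc (T - δ) T, HasDerivAt (x 1) u t)
    (hxk : ∀ j, 1 ≤ j → j < n → ∀ t ∈ Set.Icc (T - δ) T, HasDerivAt (x (j + 1)) (x j t) t)
    (hzero : ∀ i, 1 ≤ i → i < k → x i T = 0)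
    (hend : x k T = σ * M)
    (hbound : ∀ t ∈ Set.Icc (T - δ) T, |x k t| ≤ M) :
    (-1 : ℝ) ^ k * σ * u ≤ 0 :=
  sign_of_control_before_reaching_boundary_general n k hk1 hkn M σ hσ δ hδ u T x hx1 hxk hzero hend
    hbound
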